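/- Let φ, β ∈ ℝ, a ≥ 0, m ≥ 2, θ := |φ| + a, and let κ := (β/m + √((β/m)² + 4θ))/2. Then v := m·κ satisfies βv - v² = -m²·θ, and consequently φ + βv - v² = φ - m²(|φ| + a) ≤ -a. -/
import Mathlib

theorem scaled_quadratic_feedback (φ β a m : ℝ) (ha : a ≥ 0) (hm : m ≥ 2)
    (θ : ℝ) (hθ : θ = |φ| + a)
    (κ : ℝ) (hκ : κ = (β / m + Real.sqrt ((β / m) ^ 2 + 4 * θ)) / 2)
    (v : ℝ) (hv : v = m * κ) :
    β * v - v ^ 2 = -m ^ 2 * θ ∧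
      φ + β * v - v ^ 2 = φ - m ^ 2 * (|φ| + a) ∧
      φ + β * v - v ^ 2 ≤ -a := by
  have hm0 : m ≠ 0 := by linarith
  have hθ0 : (0:ℝ) ≤ θ := by rw [hθ]; positivity
  have hs : Real.sqrt ((β / m) ^ 2 + 4 * θ) ^ 2 = (β / m) ^ 2 + 4 * θ :=
    Real.sq_sqrt (by positivity)
  have hκ2 : κ ^ 2 = (β / m) * κ + θ := by
    subst hκ; linear_combination (1/4 : ℝ) * hs
  have hκ2' : m * κ ^ 2 = β * κ + m * θ := by
    field_simp at hκ2 ⊢; linear_combination hκ2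
  have h1 : β * v - v ^ 2 = -m ^ 2 * θ := by
    subst hv; linear_combination (-m) * hκ2'
  refine ⟨h1, ?_, ?_⟩
  · rw [hθ] at h1; linarith
  · have habs : φ ≤ |φ| := le_abs_self φ
    have h0 : (0:ℝ) ≤ |φ| := abs_nonneg φ
    have hm2 : (4:ℝ) ≤ m ^ 2 := by nlinarith
    rw [hθ] at h1
    nlinarith [mul_nonneg (by nlinarith : (0:ℝ) ≤ m ^ 2 - 1) h0,
      mul_nonneg (by nlinarith : (0:ℝ) ≤ m ^ 2 - 1) ha]
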